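/- For every integer m ≥ 2, assuming Gauss' digamma theorem, ∑_{r=1}^{m-1} cot(πr/m)·ψ(r/m) = -π(m-1)(m-2)/6. -/

import Mathlib

/-!
Under `r ↦ m - r` the cotangent `cot (π r / m)` changes sign while the other terms of Gauss'
formula for `ψ (r / m)` do not, so they contribute nothing and only
`-(π / 2) ∑ cot² (π r / m)` is left. For that sum let `ζ = exp (2πi / m)`: since
`(ζ ^ r - 1) ∑_{k<m} k ζ ^ (r k) = m`, we get `cot (π r / m) = i + (2i / m) ∑_{k<m} k ζ ^ (r k)`,
and the orthogonality relations for `r ↦ ζ ^ (r k)` give the sums over `r` of these Fourier sums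
and of their squares.
-/

open Real Finset

/-- The digamma function ψ(x) = Γ'(x)/Γ(x). -/
noncomputable def digamma (x : ℝ) : ℝ := deriv Real.Gamma x / Real.Gamma x

theorem Nat.dvd_add_iff_eq_sub_mod {n j k : ℕ} (hj : j < n) (hk : k < n) :
    n ∣ j + k ↔ k = (n - j) % n := by
  rcases j.eq_zero_or_pos with rfl | hj0
  · simp only [zero_add, Nat.sub_zero, Nat.mod_self]
    exact ⟨fun h => Nat.eq_zero_of_dvd_of_lt h hk, by rintro rfl; exact dvd_zero n⟩
  · rw [Nat.mod_eq_of_lt (by omega)]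
    constructor
    · rintro ⟨c, hc⟩
      obtain _ | _ | c := c
      · omega
      · omega
      · nlinarith
    · rintro rfl
      rw [Nat.add_sub_cancel' hj.le]

section Sums

variable {R : Type*} [CommRing R]

theorem sub_one_mul_sum_range_natCast_mul_pow (u : R) (n : ℕ) :
    (u - 1) * ∑ k ∈ range n, (k : R) * u ^ k = n * u ^ n - u * ∑ k ∈ range n, u ^ k := by
  induction n with
  | zero => simp
  | succ n ih => rw [sum_range_succ, sum_range_succ, mul_add, ih]; push_cast; ring

theorem sum_range_natCast_mul_two (n : ℕ) : (∑ k ∈ range n, (k : R)) * 2 = n * (n - 1) := by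
  induction n with
  | zero => simp
  | succ n ih => rw [sum_range_succ, add_mul, ih]; push_cast; ring

theorem sum_range_natCast_mul_sub_mul_six (n : ℕ) :
    (∑ k ∈ range n, (k : R) * (n - k)) * 6 = (n + 1) * n * (n - 1) := by
  induction n with
  | zero => simp
  | succ n ih =>
    have hsplit : ∑ k ∈ range n, (k : R) * (↑(n + 1) - k) =
        ∑ k ∈ range n, (k : R) * (n - k) + ∑ k ∈ range n, (k : R) := by
      rw [← sum_add_distrib]
      exact sum_congr rfl fun k _ => by push_cast; ring
    rw [sum_range_succ, hsplit]
    push_cast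
    linear_combination ih + 3 * sum_range_natCast_mul_two (R := R) n

end Sums

section RootsOfUnity

variable {K : Type*} [Field K]

theorem sub_one_mul_sum_range_natCast_mul_pow_of_pow_eq_one {u : K} {n : ℕ} (hun : u ^ n = 1)
    (hu : u ≠ 1) : (u - 1) * ∑ k ∈ range n, (k : K) * u ^ k = n := by
  rw [sub_one_mul_sum_range_natCast_mul_pow, geom_sum_eq hu, hun]
  simp

namespace IsPrimitiveRoot

variable {ζ : K} {n : ℕ}

theorem sum_range_pow_mul (hζ : IsPrimitiveRoot ζ n) (k : ℕ) :
    ∑ r ∈ range n, ζ ^ (r * k) = if n ∣ k then (n : K) else 0 := by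
  simp_rw [mul_comm _ k, pow_mul]
  split_ifs with hk
  · simp [(hζ.pow_eq_one_iff_dvd k).mpr hk]
  · rw [geom_sum_eq (mt (hζ.pow_eq_one_iff_dvd k).mp hk), ← pow_mul, mul_comm, pow_mul,
      hζ.pow_eq_one, one_pow, sub_self, zero_div]

theorem sum_range_sum_mul_pow (hζ : IsPrimitiveRoot ζ n) (a : ℕ → K) :
    ∑ r ∈ range n, ∑ k ∈ range n, a k * ζ ^ (r * k) = n * a 0 := by
  rcases n.eq_zero_or_pos with rfl | hn
  · simp
  have hdvd (k : ℕ) (hk : k ∈ range n) : n ∣ k ↔ k = 0 := by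
    simpa using Nat.dvd_add_iff_eq_sub_mod hn (mem_range.mp hk)
  rw [sum_comm]
  simp_rw [← mul_sum, hζ.sum_range_pow_mul, mul_ite, mul_zero]
  rw [sum_congr rfl fun k hk => if_congr (hdvd k hk) rfl rfl, sum_ite_eq' _ _,
    if_pos (mem_range.mpr hn), mul_comm]

theorem sum_range_sum_mul_pow_sq (hζ : IsPrimitiveRoot ζ n) (a : ℕ → K) :
    ∑ r ∈ range n, (∑ k ∈ range n, a k * ζ ^ (r * k)) ^ 2 =
      n * ∑ j ∈ range n, a j * a ((n - j) % n) := by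
  have hsq (r : ℕ) : (∑ k ∈ range n, a k * ζ ^ (r * k)) ^ 2 =
      ∑ j ∈ range n, ∑ k ∈ range n, a j * a k * ζ ^ (r * (j + k)) := by
    simp_rw [sq, sum_mul_sum, mul_add, pow_add]
    exact sum_congr rfl fun j _ => sum_congr rfl fun k _ => by ring
  simp_rw [hsq]
  rw [sum_comm, mul_sum]
  refine sum_congr rfl fun j hj => ?_
  rw [sum_comm]
  simp_rw [← mul_sum, hζ.sum_range_pow_mul, mul_ite, mul_zero]
  have hjn := mem_range.mp hj
  rw [sum_congr rfl fun k hk =>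
      if_congr (Nat.dvd_add_iff_eq_sub_mod hjn (mem_range.mp hk)) rfl rfl,
    sum_ite_eq' _ _, if_pos (mem_range.mpr (Nat.mod_lt _ (by omega)))]
  ring

end IsPrimitiveRoot

end RootsOfUnity

theorem Complex.cot_eq_I_add_sum {z : ℂ} {n : ℕ} (hn : n ≠ 0)
    (hun : Complex.exp (2 * I * z) ^ n = 1) (hu : Complex.exp (2 * I * z) ≠ 1) :
    Complex.cot z = I + 2 * I / n * ∑ k ∈ range n, k * Complex.exp (2 * I * z) ^ k := by
  have hT := sub_one_mul_sum_range_natCast_mul_pow_of_pow_eq_one hun hu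
  have hu' : 1 - Complex.exp (2 * I * z) ≠ 0 := sub_ne_zero.mpr (Ne.symm hu)
  rw [Complex.cot_eq_exp_ratio]
  field_simp
  set u := Complex.exp (2 * I * z)
  set T := ∑ k ∈ range n, (k : ℂ) * u ^ k
  linear_combination -2 * hT + (u * n + 2 * u * T - n - 2 * T) * Complex.I_sq

theorem Real.ofReal_cot_pi_mul_div_eq_sum {m r : ℕ} (hr : 0 < r) (hrm : r < m) :
    (cot (π * r / m) : ℂ) = Complex.I + 2 * Complex.I / m *
      ∑ k ∈ range m, (k : ℂ) * Complex.exp (2 * π * Complex.I / m) ^ (r * k) := by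
  set ζ := Complex.exp (2 * π * Complex.I / m)
  have hζ : IsPrimitiveRoot ζ m := Complex.isPrimitiveRoot_exp m (by omega)
  have hexp : Complex.exp (2 * Complex.I * ↑(π * r / m)) = ζ ^ r := by
    rw [← Complex.exp_nat_mul]; push_cast; ring_nf
  have hun : (ζ ^ r) ^ m = 1 := by rw [pow_right_comm, hζ.pow_eq_one, one_pow]
  rw [Complex.ofReal_cot, Complex.cot_eq_I_add_sum (by omega) (hexp ▸ hun)
    (hexp ▸ hζ.pow_ne_one_of_pos_of_lt hr.ne' hrm), hexp]
  simp_rw [pow_mul]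

theorem Real.sum_Icc_cot_sq {m : ℕ} (hm : m ≠ 0) :
    ∑ r ∈ Icc 1 (m - 1), cot (π * r / m) ^ 2 = ((m : ℝ) - 1) * (m - 2) / 3 := by
  set ζ := Complex.exp (2 * π * Complex.I / m)
  have hζ : IsPrimitiveRoot ζ m := Complex.isPrimitiveRoot_exp m hm
  set F : ℕ → ℂ := fun r => ∑ k ∈ range m, (k : ℂ) * ζ ^ (r * k)
  have hcot (r : ℕ) (hr : r ∈ Ico 1 m) :
      (cot (π * r / m) : ℂ) = Complex.I + 2 * Complex.I / m * F r :=
    Real.ofReal_cot_pi_mul_div_eq_sum (mem_Ico.mp hr).1 (mem_Ico.mp hr).2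
  have hF0 : F 0 = m * (m - 1) / 2 := by
    rw [eq_div_iff two_ne_zero]
    simpa [F] using sum_range_natCast_mul_two (R := ℂ) m
  have hsplit (f : ℕ → ℂ) : ∑ r ∈ range m, f r = f 0 + ∑ r ∈ Ico 1 m, f r := by
    rw [range_eq_Ico, sum_eq_sum_Ico_succ_bot (Nat.pos_of_ne_zero hm)]
  have hF : ∑ r ∈ Ico 1 m, F r = -F 0 := by
    have := hζ.sum_range_sum_mul_pow Nat.cast
    rw [Nat.cast_zero, mul_zero, hsplit] at this
    linear_combination this
  have hF2 : ∑ r ∈ Ico 1 m, F r ^ 2 = m * ∑ k ∈ range m, (k : ℂ) * (m - k) - F 0 ^ 2 := by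
    have hpair (k : ℕ) (hk : k ∈ range m) : (k : ℂ) * ((m - k) % m : ℕ) = k * (m - k) := by
      rcases k.eq_zero_or_pos with rfl | hk0
      · simp
      rw [Nat.mod_eq_of_lt (by omega), Nat.cast_sub (mem_range.mp hk).le]
    have := hζ.sum_range_sum_mul_pow_sq Nat.cast
    rw [sum_congr rfl hpair, hsplit] at this
    linear_combination this
  have hsum : ∑ k ∈ range m, (k : ℂ) * (m - k) = (m + 1) * m * (m - 1) / 6 := by
    rw [eq_div_iff (by norm_num), sum_range_natCast_mul_sub_mul_six]
  have hmC : (m : ℂ) ≠ 0 := Nat.cast_ne_zero.mpr hm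
  rw [Icc_sub_one_right_eq_Ico_of_not_isMin (by simpa using hm), ← Complex.ofReal_inj]
  push_cast [-Complex.ofReal_cot]
  calc ∑ r ∈ Ico 1 m, (cot (π * r / m) : ℂ) ^ 2
      = ∑ r ∈ Ico 1 m, (-1 - 4 / m * F r - 4 / m ^ 2 * F r ^ 2) := by
        refine sum_congr rfl fun r hr => ?_
        rw [hcot r hr]
        linear_combination (1 + 4 / m * F r + 4 / m ^ 2 * F r ^ 2) * Complex.I_sq
    _ = -(m - 1) - 4 / m * ∑ r ∈ Ico 1 m, F r - 4 / m ^ 2 * ∑ r ∈ Ico 1 m, F r ^ 2 := by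
        rw [sum_sub_distrib, sum_sub_distrib, ← mul_sum, ← mul_sum, sum_const, Nat.card_Ico,
          nsmul_eq_mul, Nat.cast_sub (by omega)]
        ring
    _ = ((m : ℂ) - 1) * (m - 2) / 3 := by
        rw [hF, hF2, hF0, hsum]
        field_simp
        ring

theorem Real.cot_pi_sub (x : ℝ) : cot (π - x) = -cot x := by
  rw [cot_eq_cos_div_sin, cot_eq_cos_div_sin, cos_pi_sub, sin_pi_sub, neg_div]

theorem Real.cot_pi_mul_sub_div {m r : ℕ} (hr : r ≤ m) :
    cot (π * ↑(m - r) / m) = -cot (π * r / m) := by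
  obtain rfl | hm := eq_or_ne m 0
  · simp [cot_eq_cos_div_sin]
  rw [Nat.cast_sub hr, ← cot_pi_sub]
  congr 1
  field_simp

theorem Real.cos_two_pi_mul_sub_div {m r : ℕ} (l : ℕ) (hr : r ≤ m) :
    cos (2 * π * ↑(m - r) * l / m) = cos (2 * π * r * l / m) := by
  obtain rfl | hm := eq_or_ne m 0
  · simp
  rw [Nat.cast_sub hr, ← cos_nat_mul_two_pi_sub _ l]
  congr 1
  field_simp
  ring

theorem Finset.sum_Icc_sub_one_eq_zero_of_apply_sub_eq_neg {M : Type*} [AddCommGroup M]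
    [IsAddTorsionFree M] {n : ℕ} (f : ℕ → M) (hf : ∀ r ∈ Icc 1 (n - 1), f (n - r) = -f r) :
    ∑ r ∈ Icc 1 (n - 1), f r = 0 := by
  refine sum_involution (fun r _ => n - r) (fun r hr => by rw [hf r hr, add_neg_cancel])
    (fun r hr hr0 hfix => hr0 (self_eq_neg.mp ?_)) (fun r hr => ?_) (fun r hr => ?_)
  · rw [← hf r hr, hfix]
  · simp only [mem_Icc] at hr ⊢; omega
  · simp only [mem_Icc] at hr; omega

theorem stmt14 (m : ℕ) (hm : 2 ≤ m)
    (hGauss : ∀ r : ℕ, 1 ≤ r → r ≤ m - 1 →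
      digamma (r / m) =
        -Real.eulerMascheroniConstant - Real.log (2 * m) - (π / 2) * Real.cot (π * r / m)
          + ∑ l ∈ Finset.Icc 1 (m - 1),
              Real.cos (2 * π * r * l / m) * Real.log (Real.sin (π * l / m))) :
    (∑ r ∈ Finset.Icc 1 (m - 1), Real.cot (π * r / m) * digamma (r / m)) =
      -π * (m - 1) * (m - 2) / 6 := by
  set G : ℕ → ℝ := fun r => -eulerMascheroniConstant - log (2 * m) +
    ∑ l ∈ Icc 1 (m - 1), cos (2 * π * r * l / m) * log (sin (π * l / m))
  have hodd : ∑ r ∈ Icc 1 (m - 1), cot (π * r / m) * G r = 0 := by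
    refine sum_Icc_sub_one_eq_zero_of_apply_sub_eq_neg _ fun r hr => ?_
    have hrm : r ≤ m := by grind
    simp only [G, cot_pi_mul_sub_div hrm, cos_two_pi_mul_sub_div _ hrm, neg_mul]
  calc ∑ r ∈ Icc 1 (m - 1), cot (π * r / m) * digamma (r / m)
      = ∑ r ∈ Icc 1 (m - 1), (cot (π * r / m) * G r - π / 2 * cot (π * r / m) ^ 2) := by
        refine sum_congr rfl fun r hr => ?_
        obtain ⟨hr1, hrm⟩ := mem_Icc.mp hr
        rw [hGauss r hr1 hrm]
        ring
    _ = -π * (m - 1) * (m - 2) / 6 := by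
        rw [sum_sub_distrib, hodd, ← mul_sum, sum_Icc_cot_sq (by omega)]
        ring
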